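/- Type-based universal simulation from i.i.d. finite sources: Let 𝒳 be a finite set and Q_Y a continuous (atomless) probability measure on ℝ. There exists, for each n, a function f_n : 𝒳^n → ℝ, constructed without knowledge of P_X, such that for every probability mass function P_X on 𝒳, the output Y = f_n(X^n) with X^n ∼ P_X^n satisfies |P_Y − Q_Y|_KS ≤ (1/2)(n+1)^{|𝒳|}·(max_x P_X(x))^n. -/

import Mathlib

/-!
Conditionally on its type, `Xⁿ` is uniform on its type class `T`, whatever `P_X` is. Sending the
`k`-th sequence of `T` to the quantile of `Q` at `(2k + 1) / 2|T|` makes the conditional CDF error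
at most `1 / 2|T|`; weighted by `P(T)`, this is half the probability of one sequence of `T`, at
most `(max P_X)ⁿ / 2`. Summing over the at most `(n + 1)^|𝒳|` types gives the bound.
-/

open MeasureTheory Set

noncomputable def cdfR (μ : Measure ℝ) (x : ℝ) : ℝ := (μ (Set.Iic x)).toReal

noncomputable def KSdist (μ ν : Measure ℝ) : ℝ := ⨆ x : ℝ, |cdfR μ x - cdfR ν x|

open Finset ProbabilityTheory

section Quantile

variable (Q : Measure ℝ) [IsProbabilityMeasure Q]

lemma cdfR_eq_cdf : cdfR Q = cdf Q := by
  funext x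
  rw [cdfR, cdf_eq_real, measureReal_def]

variable [NullSingletonClass Q]

lemma continuous_cdf : Continuous (cdf Q) := by
  refine continuous_iff_continuousAt.2 fun a => ?_
  rw [(monotone_cdf Q).continuousAt_iff_leftLim_eq_rightLim, (cdf Q).rightLim_eq]
  have hatom : (cdf Q).measure {a} = 0 := by rw [measure_cdf]; exact measure_singleton a
  rw [StieltjesFunction.measure_singleton, ENNReal.ofReal_eq_zero] at hatom
  linarith [(monotone_cdf Q).leftLim_le (le_refl a)]

lemma exists_cdf_eq {p : ℝ} (hp₀ : 0 < p) (hp₁ : p < 1) : ∃ x, cdf Q x = p := by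
  obtain ⟨a, ha⟩ := ((tendsto_cdf_atBot Q).eventually (eventually_lt_nhds hp₀)).exists
  obtain ⟨b, hb⟩ := ((tendsto_cdf_atTop Q).eventually (eventually_gt_nhds hp₁)).exists
  have hab : a ≤ b := (monotone_cdf Q).reflect_lt (ha.trans hb) |>.le
  obtain ⟨x, -, hx⟩ := intermediate_value_Icc hab (continuous_cdf Q).continuousOn ⟨ha.le, hb.le⟩
  exact ⟨x, hx⟩

end Quantile

/-- A right inverse of `cdf Q` on `(0, 1)` for atomless `Q`; the value `0` elsewhere is junk. -/
noncomputable def quantile (Q : Measure ℝ) (p : ℝ) : ℝ :=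
  open Classical in if h : ∃ x, cdf Q x = p then h.choose else 0

lemma cdf_quantile (Q : Measure ℝ) [IsProbabilityMeasure Q] [NullSingletonClass Q] {p : ℝ}
    (hp₀ : 0 < p) (hp₁ : p < 1) : cdf Q (quantile Q p) = p := by
  have h := exists_cdf_eq Q hp₀ hp₁
  rw [quantile, dif_pos h]
  exact h.choose_spec

section Midpoints

lemma card_filter_two_mul_add_one_le {m : ℕ} {c : ℝ} (hc : 0 ≤ c) :
    (#{k ∈ Finset.range m | (2 * ((k : ℕ) : ℝ) + 1) ≤ c} : ℝ) ≤ (c + 1) / 2 := by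
  have hsub :
      {k ∈ Finset.range m | (2 * ((k : ℕ) : ℝ) + 1) ≤ c} ⊆ Finset.range ⌊(c + 1) / 2⌋₊ := by
    intro k hk
    rw [mem_filter] at hk
    rw [Finset.mem_range, Nat.lt_iff_add_one_le]
    exact Nat.le_floor (by push_cast; linarith [hk.2])
  calc (#{k ∈ Finset.range m | (2 * ((k : ℕ) : ℝ) + 1) ≤ c} : ℝ) ≤ ⌊(c + 1) / 2⌋₊ := by
        exact_mod_cast (Finset.card_le_card hsub).trans_eq (card_range _)
    _ ≤ (c + 1) / 2 := Nat.floor_le (by positivity)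

lemma le_card_filter_two_mul_add_one_lt {m : ℕ} {c : ℝ} (hc : c ≤ 2 * m) :
    (c - 1) / 2 ≤ #{k ∈ Finset.range m | (2 * ((k : ℕ) : ℝ) + 1) < c} := by
  have hsub : Finset.range (min m ⌈(c - 1) / 2⌉₊) ⊆
      {k ∈ Finset.range m | (2 * ((k : ℕ) : ℝ) + 1) < c} := by
    intro k hk
    rw [Finset.mem_range, lt_min_iff, Nat.lt_ceil] at hk
    rw [mem_filter, Finset.mem_range]
    exact ⟨hk.1, by linarith [hk.2]⟩
  calc (c - 1) / 2 ≤ ((min m ⌈(c - 1) / 2⌉₊ : ℕ) : ℝ) := by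
        push_cast
        exact le_min (by linarith) (Nat.le_ceil _)
    _ ≤ #{k ∈ Finset.range m | (2 * ((k : ℕ) : ℝ) + 1) < c} := by
        exact_mod_cast (card_range _).symm.trans_le (Finset.card_le_card hsub)

noncomputable def midpointQuantile (Q : Measure ℝ) (m k : ℕ) : ℝ :=
  quantile Q ((2 * k + 1) / (2 * m))

variable (Q : Measure ℝ) [IsProbabilityMeasure Q] [NullSingletonClass Q]

lemma abs_card_midpointQuantile_le_sub_le {m : ℕ} (hm : 0 < m) (x : ℝ) :
    |(#{k ∈ Finset.range m | midpointQuantile Q m k ≤ x} : ℝ) - m * cdf Q x| ≤ 1 / 2 := by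
  have hm' : (0 : ℝ) < 2 * m := by positivity
  have hcdf : ∀ k < m, cdf Q (midpointQuantile Q m k) = (2 * k + 1) / (2 * m) := by
    intro k hk
    have hk' : (k : ℝ) + 1 ≤ m := by exact_mod_cast hk
    exact cdf_quantile Q (by positivity) ((div_lt_one hm').2 (by linarith))
  have hupper : {k ∈ Finset.range m | midpointQuantile Q m k ≤ x} ⊆
      {k ∈ Finset.range m | (2 * ((k : ℕ) : ℝ) + 1) ≤ 2 * m * cdf Q x} := by
    refine monotone_filter_right _ fun k hk hq => ?_
    have := monotone_cdf Q hq
    rwa [hcdf k (Finset.mem_range.1 hk), div_le_iff₀' hm'] at this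
  have hlower : {k ∈ Finset.range m | (2 * ((k : ℕ) : ℝ) + 1) < 2 * m * cdf Q x} ⊆
      {k ∈ Finset.range m | midpointQuantile Q m k ≤ x} := by
    refine monotone_filter_right _ fun k hk hlt => ?_
    rw [← div_lt_iff₀' hm', ← hcdf k (Finset.mem_range.1 hk)] at hlt
    exact ((monotone_cdf Q).reflect_lt hlt).le
  have hF₀ := cdf_nonneg Q x
  have hF₁ := cdf_le_one Q x
  have h₁ := card_filter_two_mul_add_one_le (m := m) (by positivity : 0 ≤ 2 * m * cdf Q x)
  have h₂ := le_card_filter_two_mul_add_one_lt (m := m) (c := 2 * m * cdf Q x)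
    (by nlinarith)
  have h₃ := (Nat.cast_le (α := ℝ)).2 (Finset.card_le_card hupper)
  have h₄ := (Nat.cast_le (α := ℝ)).2 (Finset.card_le_card hlower)
  rw [abs_le]
  constructor <;> linarith

end Midpoints

section Rank

variable {α β : Type*} [LinearOrder β]

def rankIn (g : α → β) (T : Finset α) (y : α) : ℕ := #{z ∈ T | g z < g y}

variable {g : α → β} {T : Finset α}

lemma rankIn_lt_rankIn {y z : α} (hy : y ∈ T) (h : g y < g z) : rankIn g T y < rankIn g T z :=
  Finset.card_lt_card <| (Finset.ssubset_iff_of_subset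
    (monotone_filter_right _ fun _ _ hw => hw.trans h)).2 ⟨y, by simp [hy, h], by simp⟩

lemma bijOn_rankIn (hg : Function.Injective g) (T : Finset α) :
    Set.BijOn (rankIn g T) T (Finset.range #T) := by
  have hmaps : Set.MapsTo (rankIn g T) T (Finset.range #T) := fun y hy =>
    Finset.mem_range.2 (Finset.card_lt_card (Finset.filter_ssubset.2 ⟨y, hy, lt_irrefl _⟩))
  have hinj : Set.InjOn (rankIn g T) T := by
    intro y hy z hz hyz
    rcases lt_trichotomy (g y) (g z) with h | h | h
    · exact absurd hyz (rankIn_lt_rankIn hy h).ne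
    · exact hg h
    · exact absurd hyz (rankIn_lt_rankIn hz h).ne'
  exact ⟨hmaps, hinj, Finset.surjOn_of_injOn_of_card_le _ hmaps hinj (by simp)⟩

lemma card_filter_rankIn (hg : Function.Injective g) (T : Finset α) (p : ℕ → Prop)
    [DecidablePred p] : #{y ∈ T | p (rankIn g T y)} = #{k ∈ Finset.range #T | p k} := by
  have hbij := bijOn_rankIn hg T
  refine Finset.card_nbij (rankIn g T) (fun y hy => ?_) (hbij.injOn.mono fun y hy => ?_)
    fun k hk => ?_
  · rw [Finset.mem_coe, Finset.mem_filter] at hy ⊢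
    exact ⟨hbij.mapsTo hy.1, hy.2⟩
  · exact (Finset.mem_filter.1 hy).1
  · rw [Finset.mem_coe, Finset.mem_filter] at hk
    obtain ⟨y, hy, rfl⟩ := hbij.surjOn hk.1
    exact ⟨y, Finset.mem_filter.2 ⟨hy, hk.2⟩, rfl⟩

end Rank

lemma cdfR_map_sub_eq_sum_fiber {S K : Type*} [Fintype S] [MeasurableSpace S]
    [MeasurableSingletonClass S] [Fintype K] [DecidableEq K] (μ : Measure S)
    [IsProbabilityMeasure μ] (κ : S → K) (f : S → ℝ) (x y : ℝ) :
    cdfR (μ.map f) x - y =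
      ∑ t, ∑ s with κ s = t, μ.real {s} * ((if f s ≤ x then 1 else 0) - y) := by
  rw [Finset.sum_fiberwise]
  simp only [mul_sub, mul_ite, mul_one, mul_zero, Finset.sum_sub_distrib, ← Finset.sum_mul,
    ← Finset.sum_filter, sum_measureReal_singleton, Finset.coe_univ, probReal_univ,
    one_mul]
  congr 1
  rw [cdfR, ← measureReal_def, map_measureReal_apply (measurable_of_finite f) measurableSet_Iic]
  congr 1
  ext s
  simp

/-- On each fibre `T` of `κ` (a type class), the optimal deterministic map from the uniform law on
`T` to `Q`: its Kolmogorov–Smirnov error is `1 / 2#T`. -/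
noncomputable def fiberQuantile {S K : Type*} [Fintype S] [DecidableEq K] (Q : Measure ℝ)
    (κ : S → K) (g : S → ℕ) (s : S) : ℝ :=
  midpointQuantile Q #{s' | κ s' = κ s} (rankIn g {s' | κ s' = κ s} s)

section FiberQuantile

variable (Q : Measure ℝ) [IsProbabilityMeasure Q] [NullSingletonClass Q]
variable {S K : Type*} [Fintype S] [DecidableEq K] {κ : S → K} {g : S → ℕ}

lemma abs_card_filter_fiberQuantile_le_sub_le (hg : Function.Injective g) (t : K) (x : ℝ) :
    |(#{s | κ s = t ∧ fiberQuantile Q κ g s ≤ x} : ℝ) - #{s | κ s = t} * cdf Q x| ≤ 1 / 2 := by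
  rw [← Finset.filter_filter]
  set T : Finset S := {s | κ s = t}
  rcases T.eq_empty_or_nonempty with hT | ⟨s₀, hs₀⟩
  · simp [hT]
  have hcard : #{s ∈ T | fiberQuantile Q κ g s ≤ x} =
      #{k ∈ Finset.range #T | midpointQuantile Q #T k ≤ x} := by
    rw [← card_filter_rankIn hg T]
    refine congrArg card (Finset.filter_congr fun s hs => ?_)
    unfold fiberQuantile
    rw [(Finset.mem_filter.1 hs).2]
  rw [hcard]
  exact abs_card_midpointQuantile_le_sub_le Q (Finset.card_pos.2 ⟨s₀, hs₀⟩) x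

variable [MeasurableSpace S] [MeasurableSingletonClass S] [Fintype K]

theorem abs_cdfR_map_fiberQuantile_sub_le (μ : Measure S) [IsProbabilityMeasure μ]
    (hg : Function.Injective g) {c : ℝ}
    (hconst : ∀ s s', κ s = κ s' → μ.real {s} = μ.real {s'})
    (hle : ∀ s, μ.real {s} ≤ c) (x : ℝ) :
    |cdfR (μ.map (fiberQuantile Q κ g)) x - cdfR Q x| ≤ 1 / 2 * Fintype.card K * c := by
  have hc : 0 ≤ c := by
    obtain ⟨s⟩ := nonempty_of_isProbabilityMeasure μ
    exact measureReal_nonneg.trans (hle s)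
  have hfiber : ∀ t, |∑ s with κ s = t, μ.real {s} *
      ((if fiberQuantile Q κ g s ≤ x then 1 else 0) - cdf Q x)| ≤ c / 2 := by
    intro t
    rcases ({s | κ s = t} : Finset S).eq_empty_or_nonempty with hT | ⟨s₀, hs₀⟩
    · rw [hT, Finset.sum_empty, abs_zero]
      linarith
    have hw : ∀ s ∈ ({s | κ s = t} : Finset S), μ.real {s} = μ.real {s₀} := fun s hs =>
      hconst s s₀ ((Finset.mem_filter.1 hs).2.trans (Finset.mem_filter.1 hs₀).2.symm)
    rw [Finset.sum_congr rfl fun s hs => by rw [hw s hs], ← Finset.mul_sum,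
      Finset.sum_sub_distrib, Finset.sum_boole, Finset.sum_const, Finset.filter_filter,
      nsmul_eq_mul, abs_mul, abs_of_nonneg measureReal_nonneg]
    calc μ.real {s₀} * |_ - _| ≤ μ.real {s₀} * (1 / 2) :=
          mul_le_mul_of_nonneg_left (abs_card_filter_fiberQuantile_le_sub_le Q hg t x)
            measureReal_nonneg
      _ ≤ c / 2 := by linarith [hle s₀]
  calc |cdfR (μ.map (fiberQuantile Q κ g)) x - cdfR Q x|
      ≤ ∑ t, |∑ s with κ s = t, μ.real {s} *
          ((if fiberQuantile Q κ g s ≤ x then 1 else 0) - cdf Q x)| := by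
        rw [cdfR_eq_cdf Q, cdfR_map_sub_eq_sum_fiber μ κ]
        exact Finset.abs_sum_le_sum_abs _ _
    _ ≤ ∑ _t : K, c / 2 := Finset.sum_le_sum fun t _ => hfiber t
    _ = 1 / 2 * Fintype.card K * c := by
        rw [Finset.sum_const, Finset.card_univ, nsmul_eq_mul]
        ring

end FiberQuantile

section Types

variable {𝒳 : Type*} [Fintype 𝒳] [DecidableEq 𝒳] {n : ℕ}

/-- The type (letter counts) of a sequence, valued in `Fin (n + 1)` so that there are at most
`(n + 1) ^ |𝒳|` types. -/
def typeOf (x : Fin n → 𝒳) (a : 𝒳) : Fin (n + 1) :=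
  ⟨#{i | x i = a}, Nat.lt_succ_of_le ((Finset.card_filter_le _ _).trans_eq (by simp))⟩

lemma prod_comp_eq_prod_pow_typeOf {M : Type*} [CommMonoid M] (x : Fin n → 𝒳) (f : 𝒳 → M) :
    ∏ i, f (x i) = ∏ a, f a ^ (typeOf x a : ℕ) := by
  rw [← Finset.prod_fiberwise' Finset.univ x f]
  simp [typeOf]

end Types

lemma measureReal_pi_singleton {ι : Type*} [Fintype ι] {α : ι → Type*}
    [∀ i, MeasurableSpace (α i)] (μ : ∀ i, Measure (α i)) [∀ i, SigmaFinite (μ i)]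
    (x : ∀ i, α i) : (Measure.pi μ).real {x} = ∏ i, (μ i).real {x i} := by
  simp [measureReal_def, ENNReal.toReal_prod]

/-- Type-based universal simulation from i.i.d. finite sources: there is a simulator
`f : 𝒳ⁿ → ℝ` constructed without knowledge of `P_X` whose output KS error is at most
`(1/2)(n+1)^{|𝒳|}(max_x P_X(x))ⁿ` for every source distribution `P_X`. -/
theorem universal_simulation_finite_iid
    (𝒳 : Type*) [Fintype 𝒳] [MeasurableSpace 𝒳] [MeasurableSingletonClass 𝒳]
    (Q : Measure ℝ) [IsProbabilityMeasure Q] [NullSingletonClass Q] (n : ℕ) :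
    ∃ f : (Fin n → 𝒳) → ℝ, Measurable f ∧
      ∀ P : Measure 𝒳, IsProbabilityMeasure P →
        KSdist ((Measure.pi fun _ : Fin n => P).map f) Q ≤
          (1 / 2) * ((n : ℝ) + 1) ^ (Fintype.card 𝒳) * (⨆ x : 𝒳, (P {x}).toReal) ^ n := by
  classical
  obtain ⟨enum, henum⟩ := Countable.exists_injective_nat (Fin n → 𝒳)
  refine ⟨fiberQuantile Q typeOf enum, measurable_of_finite _, fun P hP => ciSup_le fun y => ?_⟩
  have hP_le : ∀ a, P.real {a} ≤ ⨆ a, (P {a}).toReal := fun a =>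
    le_ciSup (f := fun a => (P {a}).toReal) (Set.finite_range _).bddAbove a
  have hpi : ∀ x : Fin n → 𝒳,
      (Measure.pi fun _ => P).real {x} = ∏ a, P.real {a} ^ (typeOf x a : ℕ) := fun x => by
    rw [measureReal_pi_singleton, prod_comp_eq_prod_pow_typeOf x fun a => P.real {a}]
  have hle : ∀ x : Fin n → 𝒳, (Measure.pi fun _ => P).real {x} ≤ (⨆ a, (P {a}).toReal) ^ n :=
    fun x => by
      rw [measureReal_pi_singleton]
      calc ∏ i, P.real {x i} ≤ ∏ _i : Fin n, ⨆ a, (P {a}).toReal :=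
            Finset.prod_le_prod (fun _ _ => measureReal_nonneg) fun i _ => hP_le (x i)
        _ = _ := by simp
  simpa [Fintype.card_fun, Fintype.card_fin] using
    abs_cdfR_map_fiberQuantile_sub_le Q _ (κ := typeOf) henum
      (fun x x' h => by rw [hpi x, hpi x', h]) hle y
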